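/- The simplification rules transform deducibility constraint systems into deducibility constraint systems: if C is a deducibility constraint system and C ⇝_σ C' by one of the rules R1, R2, R3, R3', R4, Rf, then C' is again a deducibility constraint system (possibly ⊥). -/
import Mathlib


open scoped Classical

/-- Terms built from names, variables, pairing, symmetric/asymmetric encryption,
signatures and private keys. -/
inductive Tm where
  | var : ℕ → Tm
  | name : ℕ → Tm
  | pair : Tm → Tm → Tm
  | enc : Tm → Tm → Tm
  | enca : Tm → Tm → Tm
  | sign : Tm → Tm → Tm
  | priv : Tm → Tm
deriving DecidableEq

namespace Tm

/-- The variables of a term. -/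
def vars : Tm → Finset ℕ
  | var x => {x}
  | name _ => ∅
  | pair s t => s.vars ∪ t.vars
  | enc s t => s.vars ∪ t.vars
  | enca s t => s.vars ∪ t.vars
  | sign s t => s.vars ∪ t.vars
  | priv t => t.vars

/-- The subterms of a term. -/
def subterms : Tm → Finset Tm
  | var x => {var x}
  | name a => {name a}
  | pair s t => insert (pair s t) (s.subterms ∪ t.subterms)
  | enc s t => insert (enc s t) (s.subterms ∪ t.subterms)
  | enca s t => insert (enca s t) (s.subterms ∪ t.subterms)
  | sign s t => insert (sign s t) (s.subterms ∪ t.subterms)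
  | priv t => insert (priv t) t.subterms

/-- A term is a variable. -/
def IsVar : Tm → Prop
  | var _ => True
  | _ => False

end Tm

/-- The Dolev-Yao deduction relation `T ⊢ u`. -/
inductive Deduce : Finset Tm → Tm → Prop where
  | ax {T u} : u ∈ T → Deduce T u
  | pairI {T x y} : Deduce T x → Deduce T y → Deduce T (Tm.pair x y)
  | encI {T x y} : Deduce T x → Deduce T y → Deduce T (Tm.enc x y)
  | encaI {T x y} : Deduce T x → Deduce T y → Deduce T (Tm.enca x y)
  | signI {T x y} : Deduce T x → Deduce T y → Deduce T (Tm.sign x y)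
  | encE {T x y} : Deduce T (Tm.enc x y) → Deduce T y → Deduce T x
  | encaE {T x y} : Deduce T (Tm.enca x y) → Deduce T (Tm.priv y) → Deduce T x
  | fstE {T x y} : Deduce T (Tm.pair x y) → Deduce T x
  | sndE {T x y} : Deduce T (Tm.pair x y) → Deduce T y

/-- Substitutions. -/
def Subst := ℕ → Tm

/-- Applying a substitution to a term. -/
def Tm.subst (σ : Subst) : Tm → Tm
  | .var x => σ x
  | .name a => .name a
  | .pair s t => .pair (s.subst σ) (t.subst σ)
  | .enc s t => .enc (s.subst σ) (t.subst σ)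
  | .enca s t => .enca (s.subst σ) (t.subst σ)
  | .sign s t => .sign (s.subst σ) (t.subst σ)
  | .priv t => .priv (t.subst σ)

/-- The identity substitution. -/
def idSubst : Subst := Tm.var

/-- Composition of substitutions: `σ.comp τ` applies `σ` first, then `τ`. -/
def Subst.comp (σ τ : Subst) : Subst := fun x => (σ x).subst τ

/-- The variables of a finite set of terms. -/
def setVars (T : Finset Tm) : Finset ℕ := T.sup Tm.vars

/-- The subterms of a finite set of terms. -/
def stSet (T : Finset Tm) : Finset Tm := T.sup Tm.subterms

/-- A deducibility constraint `T ⊩ u`: a (nonempty) finite set of terms and a term. -/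
abbrev Cst := Finset Tm × Tm

/-- Applying a substitution to a constraint. -/
def conSubst (σ : Subst) (c : Cst) : Cst := (c.1.image (Tm.subst σ), c.2.subst σ)

/-- Applying a substitution to a constraint system. -/
def csSubst (σ : Subst) (S : Finset Cst) : Finset Cst := S.image (conSubst σ)

/-- The variables of a constraint system. -/
def sysVars (C : Finset Cst) : Finset ℕ := C.sup (fun c => setVars c.1 ∪ c.2.vars)

/-- The set `{x | (T' ⊩ x) ∈ S, T' ⊊ T}` of variables (as terms) occurring as
right-hand sides of constraints of `S` whose left-hand side is strictly contained in `T`. -/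
noncomputable def extraVars (S : Finset Cst) (T : Finset Tm) : Finset Tm :=
  (S.filter (fun c => c.1 ⊂ T ∧ c.2.IsVar)).image Prod.snd

/-- `C` is a deducibility constraint system: left-hand sides are nonempty,
totally ordered by inclusion, and every variable of a left-hand side `T` occurs in
the right-hand side of a constraint whose left-hand side is minimal among those whose
right-hand side contains the variable, and strictly included in `T`. -/
def IsCS (C : Finset Cst) : Prop :=
  (∀ c ∈ C, c.1.Nonempty) ∧
  (∀ c ∈ C, ∀ c' ∈ C, c.1 ⊆ c'.1 ∨ c'.1 ⊆ c.1) ∧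
  (∀ c ∈ C, ∀ x ∈ setVars c.1,
    ∃ c' ∈ C, x ∈ c'.2.vars ∧ c'.1 ⊂ c.1 ∧
      ∀ c'' ∈ C, x ∈ c''.2.vars → c'.1 ⊆ c''.1)

/-- A solution of a constraint system: a ground substitution whose domain is `V(C)`
such that `Tθ ⊢ uθ` for every constraint `(T ⊩ u) ∈ C`. -/
def IsSolution (θ : Subst) (C : Finset Cst) : Prop :=
  (∀ x ∈ sysVars C, (θ x).vars = ∅) ∧
  (∀ x, x ∉ sysVars C → θ x = Tm.var x) ∧
  (∀ c ∈ C, Deduce (c.1.image (Tm.subst θ)) (c.2.subst θ))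

/-- A (non-`⊥`) constraint system is solved if all right-hand sides are variables. -/
def Solved (C : Finset Cst) : Prop := ∀ c ∈ C, c.2.IsVar

/-- `σ` is a most general unifier of `t` and `u`. -/
def IsMGU (σ : Subst) (t u : Tm) : Prop :=
  t.subst σ = u.subst σ ∧
  (∀ x, x ∉ t.vars ∪ u.vars → σ x = Tm.var x) ∧
  (∀ x, (σ x).vars ⊆ t.vars ∪ u.vars) ∧
  (∀ δ : Subst, t.subst δ = u.subst δ → ∃ ρ : Subst, ∀ x, δ x = (σ x).subst ρ)

/-- The binary constructors `pair`, `enc`, `enca`, `sign`. -/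
inductive BinOp where
  | pair | enc | enca | sign

def BinOp.app : BinOp → Tm → Tm → Tm
  | .pair => Tm.pair
  | .enc => Tm.enc
  | .enca => Tm.enca
  | .sign => Tm.sign

/-- One step of simplification `C ⇝_σ C'` (result `none` represents `⊥`),
given by the rules R1, R2, R3, R3', R4, Rf. -/
inductive Step : Finset Cst → Subst → Option (Finset Cst) → Prop where
  | r1 {S : Finset Cst} {T : Finset Tm} {u : Tm} :
      (T, u) ∈ S →
      Deduce (T ∪ extraVars (S.erase (T, u)) T) u →
      Step S idSubst (some (S.erase (T, u)))
  | r2 {S : Finset Cst} {T : Finset Tm} {u t : Tm} {σ : Subst} :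
      (T, u) ∈ S → t ∈ stSet T → ¬ t.IsVar → ¬ u.IsVar → t ≠ u →
      IsMGU σ t u →
      Step S σ (some (csSubst σ S))
  | r3 {S : Finset Cst} {T : Finset Tm} {u t₁ t₂ : Tm} {σ : Subst} :
      (T, u) ∈ S → t₁ ∈ stSet T → t₂ ∈ stSet T → ¬ t₁.IsVar → ¬ t₂.IsVar →
      t₁ ≠ t₂ → IsMGU σ t₁ t₂ →
      Step S σ (some (csSubst σ S))
  | r3' {S : Finset Cst} {T : Finset Tm} {u t₁ t₂ t₃ : Tm} {σ : Subst} :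
      (T, u) ∈ S → Tm.enca t₁ t₂ ∈ stSet T → Tm.priv t₃ ∈ stSet T →
      t₂ ≠ t₃ → (t₂.IsVar ∨ t₃.IsVar) → IsMGU σ t₂ t₃ →
      Step S σ (some (csSubst σ S))
  | r4 {S : Finset Cst} {T : Finset Tm} {u : Tm} :
      (T, u) ∈ S → setVars T ∪ u.vars = ∅ → ¬ Deduce T u →
      Step S idSubst none
  | rf {S : Finset Cst} {T : Finset Tm} {u v : Tm} (b : BinOp) :
      (T, b.app u v) ∈ S →
      Step S idSubst (some (insert (T, u) (insert (T, v) (S.erase (T, b.app u v)))))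

/-- Sequences of simplification steps `C ⇝*_σ C'`, composing the substitutions. -/
inductive Steps : Finset Cst → Subst → Option (Finset Cst) → Prop where
  | refl (S) : Steps S idSubst (some S)
  | tail {S : Finset Cst} {σ : Subst} {S' : Finset Cst} {τ : Subst} {R} :
      Steps S σ (some S') → Step S' τ R → Steps S (σ.comp τ) R

/-- A security property, identified with its set of solutions (ground substitutions
making it true); `θ` solves `φσ` iff `σθ` solves `φ`. -/
def SecProp := Subst → Prop

/-- The instance `φσ` of a security property `φ` by a substitution `σ`. -/
def SecProp.subst (φ : SecProp) (σ : Subst) : SecProp := fun θ => φ (σ.comp θ)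

/-- `θ` is an attack for `φ` and `C` if it is a solution of both. -/
def IsAttack (θ : Subst) (C : Finset Cst) (φ : SecProp) : Prop :=
  IsSolution θ C ∧ φ θ

/-- One memorizing simplification step: `C;D ⇒_σ (C' \ D); (D ∪ (C \ C'))`. -/
inductive MStep : Finset Cst × Finset Cst → Subst → Finset Cst × Finset Cst → Prop where
  | mk {C D C' : Finset Cst} {σ : Subst} :
      Step C σ (some C') → MStep (C, D) σ (C' \ D, D ∪ (C \ C'))

/-- Sequences of memorizing simplification steps, composing the substitutions. -/
inductive MSteps : Finset Cst × Finset Cst → Subst → Finset Cst × Finset Cst → Prop where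
  | refl (P) : MSteps P idSubst P
  | tail {P : Finset Cst × Finset Cst} {σ : Subst} {Q : Finset Cst × Finset Cst}
      {τ : Subst} {R : Finset Cst × Finset Cst} :
      MSteps P σ Q → MStep Q τ R → MSteps P (σ.comp τ) R

lemma mem_vars_subst (σ : Subst) (t : Tm) (x : ℕ) :
    x ∈ (t.subst σ).vars ↔ ∃ y ∈ t.vars, x ∈ (σ y).vars := by
  induction t <;> simp [Tm.subst, Tm.vars, *] <;> aesop

lemma mem_setVars {T : Finset Tm} {x : ℕ} :
    x ∈ setVars T ↔ ∃ t ∈ T, x ∈ t.vars := by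
  simp [setVars, Finset.mem_sup]

lemma deduce_vars {T : Finset Tm} {u : Tm} (h : Deduce T u) : u.vars ⊆ setVars T := by
  induction h with
  | ax h => exact Finset.le_sup (f := Tm.vars) h
  | pairI _ _ ih1 ih2 => simpa [Tm.vars] using Finset.union_subset ih1 ih2
  | encI _ _ ih1 ih2 => simpa [Tm.vars] using Finset.union_subset ih1 ih2
  | encaI _ _ ih1 ih2 => simpa [Tm.vars] using Finset.union_subset ih1 ih2
  | signI _ _ ih1 ih2 => simpa [Tm.vars] using Finset.union_subset ih1 ih2
  | encE _ _ ih1 _ => exact fun x hx => ih1 (by simp [Tm.vars, hx])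
  | encaE _ _ ih1 _ => exact fun x hx => ih1 (by simp [Tm.vars, hx])
  | fstE _ ih => exact fun x hx => ih (by simp [Tm.vars, hx])
  | sndE _ ih => exact fun x hx => ih (by simp [Tm.vars, hx])

lemma isVar_eq {t : Tm} (h : t.IsVar) : ∃ n, t = Tm.var n := by
  cases t <;> simp [Tm.IsVar] at h ⊢

lemma csSubst_isCS {C : Finset Cst} (σ : Subst) (hC : IsCS C) : IsCS (csSubst σ C) := by
  obtain ⟨h1, h2, h3⟩ := hC
  refine ⟨?_, ?_, ?_⟩
  · rintro c hc
    obtain ⟨d, hd, rfl⟩ := Finset.mem_image.1 hc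
    exact ((h1 d hd).image _)
  · rintro c hc c' hc'
    obtain ⟨d, hd, rfl⟩ := Finset.mem_image.1 hc
    obtain ⟨d', hd', rfl⟩ := Finset.mem_image.1 hc'
    rcases h2 d hd d' hd' with h | h
    · exact Or.inl (Finset.image_subset_image h)
    · exact Or.inr (Finset.image_subset_image h)
  · rintro c hc x hx
    obtain ⟨d, hd, rfl⟩ := Finset.mem_image.1 hc
    -- x comes from σ y for some y in setVars d.1
    have hx' : ∃ y ∈ setVars d.1, x ∈ (σ y).vars := by
      obtain ⟨s, hs, hxs⟩ := mem_setVars.1 hx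
      obtain ⟨t, ht, rfl⟩ := Finset.mem_image.1 hs
      obtain ⟨y, hy, hxy⟩ := (mem_vars_subst σ t x).1 hxs
      exact ⟨y, mem_setVars.2 ⟨t, ht, hy⟩, hxy⟩
    obtain ⟨y, hy, hxy⟩ := hx'
    -- the set of constraints whose RHS, after σ, contains x
    set B : Finset Cst := C.filter (fun c'' => x ∈ (c''.2.subst σ).vars) with hB
    obtain ⟨c₀, hc₀C, hyc₀, hc₀sub, _⟩ := h3 d hd y hy
    have hc₀B : c₀ ∈ B := by
      refine Finset.mem_filter.2 ⟨hc₀C, ?_⟩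
      exact (mem_vars_subst σ c₀.2 x).2 ⟨y, hyc₀, hxy⟩
    obtain ⟨cm, hcmB, hcmmin⟩ := Finset.exists_min_image B (fun c => c.1.card) ⟨c₀, hc₀B⟩
    have hcmC : cm ∈ C := (Finset.mem_filter.1 hcmB).1
    -- cm's LHS is ⊆ the LHS of every element of B
    have hmin : ∀ c'' ∈ B, cm.1 ⊆ c''.1 := by
      intro c'' hc''
      rcases h2 cm hcmC c'' (Finset.mem_filter.1 hc'').1 with h | h
      · exact h
      · exact (Finset.eq_of_subset_of_card_le h (hcmmin c'' hc'')) ▸ Finset.Subset.refl _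
    have hsubcm : cm.1 ⊆ d.1 := (hmin c₀ hc₀B).trans hc₀sub.subset
    refine ⟨conSubst σ cm, Finset.mem_image_of_mem _ hcmC,
      (Finset.mem_filter.1 hcmB).2, ?_, ?_⟩
    · refine Finset.ssubset_iff_subset_ne.2 ⟨Finset.image_subset_image hsubcm, ?_⟩
      intro heq
      have hx2 : x ∈ setVars (conSubst σ cm).1 := by
        rw [show (conSubst σ cm).1 = (conSubst σ d).1 from heq]; exact hx
      obtain ⟨s, hs, hxs⟩ := mem_setVars.1 hx2
      obtain ⟨t, ht, rfl⟩ := Finset.mem_image.1 hs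
      obtain ⟨z, hz, hxz⟩ := (mem_vars_subst σ t x).1 hxs
      obtain ⟨e, heC, hze, hesub, _⟩ := h3 cm hcmC z (mem_setVars.2 ⟨t, ht, hz⟩)
      have heB : e ∈ B := Finset.mem_filter.2
        ⟨heC, (mem_vars_subst σ e.2 x).2 ⟨z, hze, hxz⟩⟩
      exact absurd (hmin e heB) (fun hh => (hesub.not_subset) hh)
    · rintro c'' hc'' hx''
      obtain ⟨e, heC, rfl⟩ := Finset.mem_image.1 hc''
      have heB : e ∈ B := Finset.mem_filter.2 ⟨heC, hx''⟩
      exact Finset.image_subset_image (hmin e heB)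

/-- the simplification rules transform deducibility constraint systems
into deducibility constraint systems (a result `none`, i.e. `⊥`, being trivially one). -/
theorem step_preserves_cs (C : Finset Cst) (σ : Subst) (R : Option (Finset Cst))
    (hC : IsCS C) (h : Step C σ R) :
    ∀ C' : Finset Cst, R = some C' → IsCS C' := by
  rintro C' hR
  obtain ⟨h1, h2, h3⟩ := hC
  cases h with
  | r1 hmem hded =>
    rename_i T u
    injection hR with hR; subst hR
    refine ⟨fun c hc => h1 c (Finset.mem_of_mem_erase hc),
      fun c hc c' hc' => h2 c (Finset.mem_of_mem_erase hc) c' (Finset.mem_of_mem_erase hc'),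
      ?_⟩
    intro c hc x hx
    obtain ⟨c', hc'C, hxc', hsub, hmin⟩ := h3 c (Finset.mem_of_mem_erase hc) x hx
    by_cases hce : c' = (T, u)
    · exfalso
      subst hce
      have hxvars : x ∈ setVars (T ∪ extraVars (C.erase (T, u)) T) :=
        deduce_vars hded hxc'
      obtain ⟨t, ht, hxt⟩ := mem_setVars.1 hxvars
      rcases Finset.mem_union.1 ht with ht | ht
      · obtain ⟨c'', hc''C, hxc'', hsub'', _⟩ := h3 (T, u) hmem x (mem_setVars.2 ⟨t, ht, hxt⟩)
        exact hsub''.not_subset (hmin c'' hc''C hxc'')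
      · obtain ⟨c₀, hc₀, rfl⟩ := Finset.mem_image.1 ht
        obtain ⟨hc₀E, hc₀sub, _⟩ := Finset.mem_filter.1 hc₀
        exact hc₀sub.not_subset (hmin c₀ (Finset.mem_of_mem_erase hc₀E) hxt)
    · exact ⟨c', Finset.mem_erase.2 ⟨hce, hc'C⟩, hxc', hsub,
        fun c'' hc'' hx'' => hmin c'' (Finset.mem_of_mem_erase hc'') hx''⟩
  | r2 hmem ht hv1 hv2 hne hmgu =>
    injection hR with hR; subst hR; exact csSubst_isCS _ ⟨h1, h2, h3⟩
  | r3 hmem ht1 ht2 hv1 hv2 hne hmgu =>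
    injection hR with hR; subst hR; exact csSubst_isCS _ ⟨h1, h2, h3⟩
  | r3' hmem ht1 ht2 hne hv hmgu =>
    injection hR with hR; subst hR; exact csSubst_isCS _ ⟨h1, h2, h3⟩
  | r4 hmem hv hnd => cases hR
  | rf b hmem =>
    rename_i T u v
    injection hR with hR; subst hR
    have happ : (b.app u v).vars = u.vars ∪ v.vars := by
      cases b <;> rfl
    have proj : ∀ c ∈ insert (T, u) (insert (T, v) (C.erase (T, b.app u v))),
        ∃ d ∈ C, d.1 = c.1 ∧ c.2.vars ⊆ d.2.vars := by
      intro c hc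
      rcases Finset.mem_insert.1 hc with rfl | hc
      · exact ⟨(T, b.app u v), hmem, rfl, by rw [happ]; exact Finset.subset_union_left⟩
      rcases Finset.mem_insert.1 hc with rfl | hc
      · exact ⟨(T, b.app u v), hmem, rfl, by rw [happ]; exact Finset.subset_union_right⟩
      · exact ⟨c, Finset.mem_of_mem_erase hc, rfl, Finset.Subset.refl _⟩
    refine ⟨?_, ?_, ?_⟩
    · intro c hc
      obtain ⟨d, hdC, hfst, _⟩ := proj c hc
      exact hfst ▸ h1 d hdC
    · intro c hc c' hc'
      obtain ⟨d, hdC, hfst, _⟩ := proj c hc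
      obtain ⟨d', hd'C, hfst', _⟩ := proj c' hc'
      rw [← hfst, ← hfst']
      exact h2 d hdC d' hd'C
    · intro c hc x hx
      obtain ⟨d, hdC, hfst, _⟩ := proj c hc
      obtain ⟨c', hc'C, hxc', hsub, hmin⟩ := h3 d hdC x (hfst ▸ hx)
      have hmin' : ∀ c'' ∈ insert (T, u) (insert (T, v) (C.erase (T, b.app u v))),
          x ∈ c''.2.vars → c'.1 ⊆ c''.1 := by
        intro c'' hc'' hx''
        obtain ⟨d'', hd''C, hf'', hv''⟩ := proj c'' hc''
        exact hf'' ▸ hmin d'' hd''C (hv'' hx'')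
      by_cases hce : c' = (T, b.app u v)
      · subst hce
        have hxuv : x ∈ u.vars ∪ v.vars := happ ▸ hxc'
        rcases Finset.mem_union.1 hxuv with hxu | hxv
        · exact ⟨(T, u), Finset.mem_insert_self _ _, hxu, hfst ▸ hsub,
            fun c'' hc'' hx'' => hmin' c'' hc'' hx''⟩
        · exact ⟨(T, v), Finset.mem_insert_of_mem (Finset.mem_insert_self _ _), hxv,
            hfst ▸ hsub, fun c'' hc'' hx'' => hmin' c'' hc'' hx''⟩
      · exact ⟨c', Finset.mem_insert_of_mem (Finset.mem_insert_of_mem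
          (Finset.mem_erase.2 ⟨hce, hc'C⟩)), hxc', hfst ▸ hsub, hmin'⟩
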